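/- The function K defined on (0, ∞) by K(x) = (√π/2) · (e^{−x²}/x) · erfi(x) tends to 0 as x tends to +∞. -/

import Mathlib

/-! Since `t ^ 2 ≤ x * t` on `[0, x]`, we get `∫₀ˣ e^{t²} ≤ ∫₀ˣ e^{xt} ≤ e^{x²} / x`,
hence `0 ≤ K x ≤ 1 / x ^ 2`. -/

open Real Filter

/-- The imaginary error function `erfi x = (2/√π) ∫₀ˣ e^{t²} dt`. -/
noncomputable def erfi (x : ℝ) : ℝ :=
  (2 / Real.sqrt π) * ∫ t in (0:ℝ)..x, Real.exp (t ^ 2)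

/-- `K x = (√π/2) · (e^{−x²}/x) · erfi x`. -/
noncomputable def K (x : ℝ) : ℝ :=
  (Real.sqrt π / 2) * (Real.exp (-x ^ 2) / x) * erfi x

theorem integral_exp_mul_eq {a : ℝ} (ha : a ≠ 0) (b c : ℝ) :
    ∫ t in b..c, exp (a * t) = (exp (a * c) - exp (a * b)) / a := by
  rw [intervalIntegral.integral_comp_mul_left exp ha, integral_exp, smul_eq_mul, inv_mul_eq_div]

theorem integral_exp_sq_le {x : ℝ} (hx : 0 < x) :
    ∫ t in (0:ℝ)..x, exp (t ^ 2) ≤ exp (x ^ 2) / x := by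
  calc ∫ t in (0:ℝ)..x, exp (t ^ 2)
      ≤ ∫ t in (0:ℝ)..x, exp (x * t) := by
        refine intervalIntegral.integral_mono_on hx.le
          (Continuous.intervalIntegrable (by fun_prop) _ _)
          (Continuous.intervalIntegrable (by fun_prop) _ _) fun t ht => ?_
        rw [exp_le_exp, sq]
        exact mul_le_mul_of_nonneg_right ht.2 ht.1
    _ = (exp (x ^ 2) - 1) / x := by
        rw [integral_exp_mul_eq hx.ne', mul_zero, exp_zero, sq]
    _ ≤ exp (x ^ 2) / x := by gcongr; linarith

theorem K_eq_mul_integral (x : ℝ) : K x = exp (-x ^ 2) / x * ∫ t in (0:ℝ)..x, exp (t ^ 2) := by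
  have : sqrt π ≠ 0 := (sqrt_pos.mpr pi_pos).ne'
  unfold K erfi
  field_simp

theorem K_nonneg {x : ℝ} (hx : 0 ≤ x) : 0 ≤ K x := by
  rw [K_eq_mul_integral]
  have : 0 ≤ ∫ t in (0:ℝ)..x, exp (t ^ 2) :=
    intervalIntegral.integral_nonneg hx fun t _ => (exp_pos (t ^ 2)).le
  positivity

theorem K_le_inv_sq {x : ℝ} (hx : 0 < x) : K x ≤ x⁻¹ ^ 2 := by
  calc K x ≤ exp (-x ^ 2) / x * (exp (x ^ 2) / x) := by
        rw [K_eq_mul_integral]; gcongr; exact integral_exp_sq_le hx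
    _ = x⁻¹ ^ 2 := by
        rw [div_mul_div_comm, ← exp_add, neg_add_cancel, exp_zero]; ring

/-- `K(x) → 0` as `x → +∞`. -/
theorem K_tendsto_zero : Tendsto K atTop (nhds 0) := by
  have h : Tendsto (fun x : ℝ => x⁻¹ ^ 2) atTop (nhds 0) := by
    simpa using (tendsto_inv_atTop_zero (𝕜 := ℝ)).pow 2
  refine squeeze_zero' ?_ ?_ h
  · filter_upwards [eventually_ge_atTop 0] with x hx using K_nonneg hx
  · filter_upwards [eventually_gt_atTop 0] with x hx using K_le_inv_sq hx
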